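/- arXiv:2504.13241 — 5 statements merged into one kernel-verified Lean document; each statement's English description precedes it below -/
import Mathlib

section
/- Let $[a,b] \subseteq \mathbb{R}$ be an interval, $y_1,\dots,y_N \in [a,b]$, and $p_1,\dots,p_N$ positive reals with $\sum_{n=1}^N p_n = 1$. If $f:[a,b]\to\mathbb{R}$ is convex on $[a,b]$, then $\sum_{n=1}^N p_n f(y_n) - f\left(\sum_{n=1}^N p_n y_n\right) \le f(a) + f(b) - 2 f\left(\frac{a+b}{2}\right)$. -/
/-!
Write each point as a convex combination `s a + t b` of the endpoints. Bounding every `f (y n)` by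
its chord value shows that the Jensen gap of the points is at most the gap
`s f a + t f b - f (s a + t b)` of their mean against the chord. The reflected point `t a + s b`
has the same midpoint with `s a + t b` as `a` with `b`, so convexity at the midpoint and on the
chord through the reflected point bounds this by `f a + f b - 2 f ((a + b) / 2)`.
-/

open Finset

namespace ConvexOn

variable {E : Type*} [AddCommGroup E] [Module ℝ E] {C : Set E} {f : E → ℝ} {a b : E}

theorem combo_gap_le_midpoint_gap (hf : ConvexOn ℝ C f) (ha : a ∈ C) (hb : b ∈ C) {s t : ℝ}
    (hs : 0 ≤ s) (ht : 0 ≤ t) (hst : s + t = 1) :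
    s * f a + t * f b - f (s • a + t • b) ≤ f a + f b - 2 * f (midpoint ℝ a b) := by
  obtain rfl : t = 1 - s := by linarith
  have hmid : midpoint ℝ a b
      = (1 / 2 : ℝ) • (s • a + (1 - s) • b) + (1 / 2 : ℝ) • ((1 - s) • a + s • b) := by
    rw [midpoint_eq_smul_add, invOf_eq_inv]
    module
  have hmid_le := hf.2 (hf.1 ha hb hs ht hst) (hf.1 ha hb ht hs (by linarith))
    (by norm_num : (0 : ℝ) ≤ 1 / 2) (by norm_num : (0 : ℝ) ≤ 1 / 2) (by norm_num)
  have hreflect_le := hf.2 ha hb ht hs (by linarith)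
  rw [← hmid] at hmid_le
  simp only [smul_eq_mul] at hmid_le hreflect_le
  linarith

variable {ι : Type*} [Fintype ι] {p : ι → ℝ} {y : ι → E}

theorem exists_sum_le_combo_of_mem_segment (hf : ConvexOn ℝ C f) (ha : a ∈ C) (hb : b ∈ C)
    (hp : ∀ i, 0 ≤ p i) (hsum : ∑ i, p i = 1) (hy : ∀ i, y i ∈ segment ℝ a b) :
    ∃ s t : ℝ, 0 ≤ s ∧ 0 ≤ t ∧ s + t = 1 ∧ ∑ i, p i • y i = s • a + t • b ∧
      ∑ i, p i * f (y i) ≤ s * f a + t * f b := by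
  choose s t hs ht hst hcombo using hy
  refine ⟨∑ i, p i * s i, ∑ i, p i * t i, sum_nonneg fun i _ => mul_nonneg (hp i) (hs i),
    sum_nonneg fun i _ => mul_nonneg (hp i) (ht i), ?_, ?_, ?_⟩
  · simp only [← sum_add_distrib, ← mul_add, hst, mul_one, hsum]
  · simp only [← hcombo, smul_add, sum_add_distrib, sum_smul, mul_smul]
  · have hchord : ∀ i, f (y i) ≤ s i * f a + t i * f b := fun i => by
      simpa only [hcombo, smul_eq_mul] using hf.2 ha hb (hs i) (ht i) (hst i)
    calc ∑ i, p i * f (y i) ≤ ∑ i, p i * (s i * f a + t i * f b) :=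
          sum_le_sum fun i _ => mul_le_mul_of_nonneg_left (hchord i) (hp i)
      _ = (∑ i, p i * s i) * f a + (∑ i, p i * t i) * f b := by
          simp only [mul_add, sum_add_distrib, sum_mul, mul_assoc]

theorem sum_sub_map_sum_le_midpoint_gap (hf : ConvexOn ℝ C f) (ha : a ∈ C) (hb : b ∈ C)
    (hp : ∀ i, 0 ≤ p i) (hsum : ∑ i, p i = 1) (hy : ∀ i, y i ∈ segment ℝ a b) :
    ∑ i, p i * f (y i) - f (∑ i, p i • y i) ≤ f a + f b - 2 * f (midpoint ℝ a b) := by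
  obtain ⟨s, t, hs, ht, hst, hmean, hsum_le⟩ :=
    hf.exists_sum_le_combo_of_mem_segment ha hb hp hsum hy
  rw [hmean]
  linarith [hf.combo_gap_le_midpoint_gap ha hb hs ht hst]

end ConvexOn

theorem converse_jensen
    (a b : ℝ) (hab : a ≤ b) (N : ℕ)
    (y : Fin N → ℝ) (hy : ∀ n, y n ∈ Set.Icc a b)
    (p : Fin N → ℝ) (hp : ∀ n, 0 < p n) (hsum : ∑ n, p n = 1)
    (f : ℝ → ℝ) (hf : ConvexOn ℝ (Set.Icc a b) f) :
    ∑ n, p n * f (y n) - f (∑ n, p n * y n)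
      ≤ f a + f b - 2 * f ((a + b) / 2) := by
  have hmid : midpoint ℝ a b = (a + b) / 2 := by
    rw [midpoint_eq_smul_add, invOf_eq_inv, smul_eq_mul]
    ring
  simpa only [smul_eq_mul, hmid] using
    hf.sum_sub_map_sum_le_midpoint_gap (Set.left_mem_Icc.2 hab) (Set.right_mem_Icc.2 hab)
      (fun n => (hp n).le) hsum (fun n => segment_eq_Icc hab ▸ hy n)
end

section
/- Let $0 < a \le b$ be real numbers, $y_1,\dots,y_N \in [a,b]$, and $p_1,\dots,p_N$ positive reals with $\sum_{n=1}^N p_n = 1$. Then $\log\left(\sum_{n=1}^N p_n y_n\right) \le \sum_{n=1}^N p_n \log(y_n) - \log(a) - \log(b) + 2\log\left(\frac{a+b}{2}\right)$. -/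
open Finset Real

theorem converse_jensen_log
    (a b : ℝ) (ha : 0 < a) (hab : a ≤ b) (N : ℕ)
    (y : Fin N → ℝ) (hy : ∀ n, y n ∈ Set.Icc a b)
    (p : Fin N → ℝ) (hp : ∀ n, 0 < p n) (hsum : ∑ n, p n = 1) :
    Real.log (∑ n, p n * y n)
      ≤ ∑ n, p n * Real.log (y n) - Real.log a - Real.log b
          + 2 * Real.log ((a + b) / 2) := by
  have hb : 0 < b := lt_of_lt_of_le ha hab
  have hy' : ∀ n, 0 < y n := fun n => lt_of_lt_of_le ha (hy n).1
  set m := ∑ n, p n * y n with hm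
  have hma : a ≤ m := by
    calc a = ∑ n, p n * a := by rw [← Finset.sum_mul, hsum, one_mul]
    _ ≤ m := Finset.sum_le_sum fun n _ =>
        mul_le_mul_of_nonneg_left (hy n).1 (hp n).le
  have hmb : m ≤ b := by
    calc m ≤ ∑ n, p n * b := Finset.sum_le_sum fun n _ =>
        mul_le_mul_of_nonneg_left (hy n).2 (hp n).le
    _ = b := by rw [← Finset.sum_mul, hsum, one_mul]
  have hm0 : 0 < m := lt_of_lt_of_le ha hma
  set S := ∑ n, p n * (y n)⁻¹ with hS
  -- Jensen: ∑ p log(1/y) ≤ log S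
  have hjensen : ∑ n, p n * Real.log (y n)⁻¹ ≤ Real.log S := by
    have := (strictConcaveOn_log_Ioi.concaveOn).le_map_sum
      (t := Finset.univ) (w := p) (p := fun n => (y n)⁻¹)
      (fun n _ => (hp n).le) hsum
      (fun n _ => Set.mem_Ioi.mpr (inv_pos.mpr (hy' n)))
    simpa [smul_eq_mul] using this
  have hS0 : 0 < S := by
    obtain ⟨n⟩ : Nonempty (Fin N) := by
      by_contra h
      rw [not_nonempty_iff] at h
      simp [Finset.univ_eq_empty] at hsum
    exact Finset.sum_pos' (fun i _ => mul_nonneg (hp i).le (inv_pos.mpr (hy' i)).le)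
      ⟨n, Finset.mem_univ n, mul_pos (hp n) (inv_pos.mpr (hy' n))⟩
  -- Kantorovich-type bound: S ≤ (a+b-m)/(a*b)
  have hSle : S ≤ (a + b - m) / (a * b) := by
    have h1 : S ≤ ∑ n, p n * ((a + b - y n) / (a * b)) := by
      apply Finset.sum_le_sum
      intro n _
      apply mul_le_mul_of_nonneg_left _ (hp n).le
      rw [le_div_iff₀ (by positivity), inv_mul_eq_div, div_le_iff₀ (hy' n)]
      nlinarith [(hy n).1, (hy n).2]
    have h2 : ∑ n, p n * ((a + b - y n) / (a * b)) = (a + b - m) / (a * b) := by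
      rw [eq_div_iff (by positivity : a * b ≠ 0), Finset.sum_mul]
      have : ∀ n : Fin N, p n * ((a + b - y n) / (a * b)) * (a * b)
          = p n * (a + b) - p n * y n := by
        intro n; field_simp
      rw [Finset.sum_congr rfl fun n _ => this n, Finset.sum_sub_distrib,
        ← Finset.sum_mul, hsum, hm]
      ring
    exact h1.trans_eq h2
  -- combine
  have hlogsum : -Real.log S ≤ ∑ n, p n * Real.log (y n) := by
    have : ∑ n, p n * Real.log (y n)⁻¹ = -∑ n, p n * Real.log (y n) := by
      simp [Real.log_inv, Finset.sum_neg_distrib, mul_neg]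
    linarith [hjensen, this ▸ hjensen]
  have key : Real.log m + Real.log S ≤ Real.log (((a + b) / 2) ^ 2 / (a * b)) := by
    rw [← Real.log_mul (ne_of_gt hm0) (ne_of_gt hS0)]
    apply Real.log_le_log (by positivity)
    calc m * S ≤ m * ((a + b - m) / (a * b)) :=
        mul_le_mul_of_nonneg_left hSle hm0.le
    _ ≤ ((a + b) / 2) ^ 2 / (a * b) := by
        rw [mul_div_assoc']
        apply div_le_div_of_nonneg_right _ (by positivity)
        nlinarith [sq_nonneg (m - (a + b) / 2)]
  have hrhs : Real.log (((a + b) / 2) ^ 2 / (a * b))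
      = 2 * Real.log ((a + b) / 2) - Real.log a - Real.log b := by
    rw [Real.log_div (by positivity) (by positivity),
      Real.log_pow, Real.log_mul (ne_of_gt ha) (ne_of_gt hb)]
    push_cast; ring
  linarith [key, hlogsum, hrhs ▸ key]
end

section
/- Let $0 < a \le b$, let $N \ge 1$, and suppose for each $i = 1,\dots,N$ we have values $c_i \in \mathbb{R}$ and $q_i > 0$ such that $\exp(-c_i)/q_i \in [a,b]$. Then $\log\left(\frac{1}{N}\sum_{i=1}^N \frac{\exp(-c_i)}{q_i}\right) \le \frac{1}{N}\sum_{i=1}^N \left(-c_i - \log q_i\right) - K$, where $K = \log(a) + \log(b) - 2\log\left(\frac{a+b}{2}\right)$. -/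
open Finset Real

/-!
Subtracting from a concave `f` its chord `ℓ` through `(a, f a)` and `(b, f b)` leaves a concave `g`
vanishing at `a` and `b`, hence nonnegative on `[a, b]`; averaging `g` at `x` and at its reflection
`a + b - x` gives `g x ≤ 2 g m` with `m = (a + b) / 2`. So for the mean `ȳ = ∑ wᵢ yᵢ`,
`f ȳ = g ȳ + ℓ ȳ ≤ 2 g m + ∑ wᵢ ℓ yᵢ ≤ 2 g m + ∑ wᵢ f yᵢ`, and `2 g m = 2 f m - f a - f b`.
The theorem is the case `f = log`, `wᵢ = 1 / N`, `yᵢ = exp (-cᵢ) / qᵢ`.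
-/

theorem ConcaveOn.sub_affine {s : Set ℝ} {f : ℝ → ℝ} (hf : ConcaveOn ℝ s f) (α β : ℝ) :
    ConcaveOn ℝ s fun x => f x - (α + β * x) := by
  refine ⟨hf.1, fun x hx y hy u v hu hv huv => ?_⟩
  have := hf.2 hx hy hu hv huv
  simp only [smul_eq_mul] at this ⊢
  linear_combination this - α * huv

theorem ConcaveOn.nonneg_of_mem_Icc {g : ℝ → ℝ} {a b x : ℝ}
    (hg : ConcaveOn ℝ (Set.Icc a b) g) (ha : 0 ≤ g a) (hb : 0 ≤ g b)
    (hx : x ∈ Set.Icc a b) : 0 ≤ g x := by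
  have hab : a ≤ b := hx.1.trans hx.2
  exact (le_min ha hb).trans <| hg.ge_on_segment (Set.left_mem_Icc.2 hab)
    (Set.right_mem_Icc.2 hab) (by rwa [segment_eq_Icc hab])

theorem ConcaveOn.le_two_mul_apply_midpoint {g : ℝ → ℝ} {a b x : ℝ}
    (hg : ConcaveOn ℝ (Set.Icc a b) g) (ha : 0 ≤ g a) (hb : 0 ≤ g b)
    (hx : x ∈ Set.Icc a b) : g x ≤ 2 * g ((a + b) / 2) := by
  have hx' : a + b - x ∈ Set.Icc a b := ⟨by linarith [hx.2], by linarith [hx.1]⟩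
  have hmid := hg.2 hx hx' (by norm_num : (0 : ℝ) ≤ 1 / 2) (by norm_num : (0 : ℝ) ≤ 1 / 2)
    (by norm_num)
  have hm : (1 / 2 : ℝ) • x + (1 / 2 : ℝ) • (a + b - x) = (a + b) / 2 := by
    simp only [smul_eq_mul]; ring
  rw [hm, smul_eq_mul, smul_eq_mul] at hmid
  linarith [hg.nonneg_of_mem_Icc ha hb hx']

theorem ConcaveOn.map_sum_le_sum_map_add {ι : Type*} {t : Finset ι} {f : ℝ → ℝ} {a b : ℝ}
    (hf : ConcaveOn ℝ (Set.Icc a b) f) {w y : ι → ℝ} (hw₀ : ∀ i ∈ t, 0 ≤ w i)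
    (hw₁ : ∑ i ∈ t, w i = 1) (hy : ∀ i ∈ t, y i ∈ Set.Icc a b) :
    f (∑ i ∈ t, w i * y i)
      ≤ ∑ i ∈ t, w i * f (y i) + (2 * f ((a + b) / 2) - f a - f b) := by
  set β := slope f a b
  set α := f a - β * a
  set g := fun x => f x - (α + β * x)
  have hg : ConcaveOn ℝ (Set.Icc a b) g := hf.sub_affine α β
  have hfb : f b = f a + β * (b - a) := by
    have := sub_smul_slope_vadd f a b; simp only [smul_eq_mul, vadd_eq_add] at this; linarith
  have hga : g a = 0 := by simp only [g, α]; ring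
  have hgb : g b = 0 := by simp only [g, α]; rw [hfb]; ring
  have hchord : ∑ i ∈ t, w i * (α + β * y i) ≤ ∑ i ∈ t, w i * f (y i) :=
    sum_le_sum fun i hi => mul_le_mul_of_nonneg_left
      (sub_nonneg.1 <| hg.nonneg_of_mem_Icc hga.ge hgb.ge (hy i hi)) (hw₀ i hi)
  have hchord_eq : ∑ i ∈ t, w i * (α + β * y i) = α + β * ∑ i ∈ t, w i * y i := by
    simp only [mul_add, sum_add_distrib, ← sum_mul, hw₁, one_mul, mul_sum, mul_left_comm]
  have hgap := hg.le_two_mul_apply_midpoint hga.ge hgb.ge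
    ((convex_Icc a b).sum_mem hw₀ hw₁ hy)
  simp only [g, smul_eq_mul] at hgap
  linarith

theorem log_partition_upper_bound_general
    (a b : ℝ) (ha : 0 < a) (N : ℕ) (hN : 1 ≤ N)
    (c q : Fin N → ℝ) (hq : ∀ i, 0 < q i)
    (hmem : ∀ i, Real.exp (-c i) / q i ∈ Set.Icc a b) :
    Real.log ((1 / (N : ℝ)) * ∑ i, Real.exp (-c i) / q i)
      ≤ (1 / (N : ℝ)) * ∑ i, (-c i - Real.log (q i))
          - (Real.log a + Real.log b - 2 * Real.log ((a + b) / 2)) := by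
  have hlog : ConcaveOn ℝ (Set.Icc a b) Real.log :=
    strictConcaveOn_log_Ioi.concaveOn.subset (fun x hx => ha.trans_le hx.1) (convex_Icc a b)
  have hlog_eq : ∀ i, Real.log (Real.exp (-c i) / q i) = -c i - Real.log (q i) := fun i => by
    rw [Real.log_div (Real.exp_ne_zero _) (hq i).ne', Real.log_exp]
  have hw : ∑ _i : Fin N, 1 / (N : ℝ) = 1 := by
    rw [sum_const, card_univ, Fintype.card_fin, nsmul_eq_mul]
    field_simp [show (N : ℝ) ≠ 0 by positivity]
  have hconverse :=
    hlog.map_sum_le_sum_map_add (fun i _ => by positivity) hw (fun i _ => hmem i)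
  simp only [← mul_sum, hlog_eq] at hconverse
  linarith

theorem log_partition_upper_bound
    (a b : ℝ) (ha : 0 < a) (hab : a ≤ b) (N : ℕ) (hN : 1 ≤ N)
    (c q : Fin N → ℝ) (hq : ∀ i, 0 < q i)
    (hmem : ∀ i, Real.exp (-c i) / q i ∈ Set.Icc a b) :
    Real.log ((1 / (N : ℝ)) * ∑ i, Real.exp (-c i) / q i)
      ≤ (1 / (N : ℝ)) * ∑ i, (-c i - Real.log (q i))
          - (Real.log a + Real.log b - 2 * Real.log ((a + b) / 2)) :=
  log_partition_upper_bound_general a b ha N hN c q hq hmem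
end

section
/- Let $N \ge 1$, let $c^{demo}_i, c^{samp}_i \in \mathbb{R}$ and $q_i > 0$ for $i = 1,\dots,N$, and suppose $0 < a \le \exp(-c^{samp}_i)/q_i \le b$ for all $i$. Define $\mathcal{L}(\theta) := \frac{1}{N}\sum_{i=1}^N c^{demo}_i + \log\left(\frac{1}{N}\sum_{i=1}^N \frac{\exp(-c^{samp}_i)}{q_i}\right)$. Then $\mathcal{L} \le \frac{1}{N}\sum_{i=1}^N \left(c^{demo}_i - c^{samp}_i - \log q_i\right) - K$, where $K = \log(a) + \log(b) - 2\log\left(\frac{a+b}{2}\right)$. -/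
/-!
Put `x i = exp (-csamp i) / q i ∈ [a, b]`; the claim is that the log of the mean of `x` exceeds the
mean of `log x` by at most `log (((a + b) / 2) ^ 2 / (a * b))`. Concavity of `log` bounds
`-mean (log x)` by `log (mean x⁻¹)`, and the Kantorovich inequality
`mean x * mean x⁻¹ ≤ ((a + b) / 2) ^ 2 / (a * b)` follows by averaging the pointwise bound
`x⁻¹ ≤ (a + b - x) / (a * b)`, which is `(x - a) * (b - x) ≥ 0`.
-/

open Finset Real

theorem inv_le_add_sub_div_mul {a b x : ℝ} (ha : 0 < a) (hax : a ≤ x) (hxb : x ≤ b) :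
    x⁻¹ ≤ (a + b - x) / (a * b) := by
  have hx : 0 < x := ha.trans_le hax
  rw [inv_eq_one_div, div_le_div_iff₀ hx (by nlinarith)]
  nlinarith [mul_nonneg (sub_nonneg.2 hax) (sub_nonneg.2 hxb)]

section WeightedMeans

variable {ι : Type*} {s : Finset ι} {w x : ι → ℝ} {a b : ℝ}

theorem sum_mul_pos_of_sum_eq_one {y : ι → ℝ} (hw : ∀ i ∈ s, 0 ≤ w i) (hw₁ : ∑ i ∈ s, w i = 1)
    (hy : ∀ i ∈ s, 0 < y i) : 0 < ∑ i ∈ s, w i * y i := by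
  obtain ⟨i, hi, hwi⟩ := exists_lt_of_sum_lt (s := s) (f := 0) (g := w) (by simp [hw₁])
  exact sum_pos' (fun j hj => mul_nonneg (hw j hj) (hy j hj).le) ⟨i, hi, mul_pos hwi (hy i hi)⟩

theorem sum_mul_mul_sum_mul_inv_le (hw : ∀ i ∈ s, 0 ≤ w i) (hw₁ : ∑ i ∈ s, w i = 1)
    (ha : 0 < a) (hx : ∀ i ∈ s, a ≤ x i ∧ x i ≤ b) :
    (∑ i ∈ s, w i * x i) * ∑ i ∈ s, w i * (x i)⁻¹ ≤ ((a + b) / 2) ^ 2 / (a * b) := by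
  set m := ∑ i ∈ s, w i * x i
  have hm : 0 ≤ m := sum_nonneg fun i hi => mul_nonneg (hw i hi) (ha.le.trans (hx i hi).1)
  have hb : 0 < b := by
    obtain ⟨i, hi⟩ : s.Nonempty := nonempty_of_sum_ne_zero (by rw [hw₁]; exact one_ne_zero)
    exact ha.trans_le ((hx i hi).1.trans (hx i hi).2)
  have hinv : ∑ i ∈ s, w i * (x i)⁻¹ ≤ (a + b - m) / (a * b) := calc
    ∑ i ∈ s, w i * (x i)⁻¹ ≤ ∑ i ∈ s, w i * ((a + b - x i) / (a * b)) :=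
      sum_le_sum fun i hi =>
        mul_le_mul_of_nonneg_left (inv_le_add_sub_div_mul ha (hx i hi).1 (hx i hi).2) (hw i hi)
    _ = (a + b - m) / (a * b) := by
      simp only [mul_div_assoc', ← sum_div, mul_sub, sum_sub_distrib, ← sum_mul, hw₁, one_mul, m]
  calc m * ∑ i ∈ s, w i * (x i)⁻¹ ≤ m * ((a + b - m) / (a * b)) :=
        mul_le_mul_of_nonneg_left hinv hm
    _ ≤ ((a + b) / 2) ^ 2 / (a * b) := by
      rw [mul_div_assoc']
      gcongr
      nlinarith [sq_nonneg ((a + b) / 2 - m)]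

theorem neg_sum_mul_log_le_log_sum_mul_inv (hw : ∀ i ∈ s, 0 ≤ w i) (hw₁ : ∑ i ∈ s, w i = 1)
    (hx : ∀ i ∈ s, 0 < x i) :
    -∑ i ∈ s, w i * log (x i) ≤ log (∑ i ∈ s, w i * (x i)⁻¹) := by
  have := strictConcaveOn_log_Ioi.concaveOn.le_map_sum hw hw₁ fun i hi => inv_pos.2 (hx i hi)
  simpa only [smul_eq_mul, log_inv, mul_neg, sum_neg_distrib] using this

theorem log_sum_mul_le_sum_mul_log_add (hw : ∀ i ∈ s, 0 ≤ w i) (hw₁ : ∑ i ∈ s, w i = 1)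
    (ha : 0 < a) (hx : ∀ i ∈ s, a ≤ x i ∧ x i ≤ b) :
    log (∑ i ∈ s, w i * x i)
      ≤ ∑ i ∈ s, w i * log (x i) + log (((a + b) / 2) ^ 2 / (a * b)) := by
  have hxpos : ∀ i ∈ s, 0 < x i := fun i hi => ha.trans_le (hx i hi).1
  have hm := sum_mul_pos_of_sum_eq_one hw hw₁ hxpos
  have hh := sum_mul_pos_of_sum_eq_one hw hw₁ fun i hi => inv_pos.2 (hxpos i hi)
  have hprod := log_le_log (mul_pos hm hh) (sum_mul_mul_sum_mul_inv_le hw hw₁ ha hx)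
  rw [log_mul hm.ne' hh.ne'] at hprod
  linarith [neg_sum_mul_log_le_log_sum_mul_inv hw hw₁ hxpos]

end WeightedMeans

theorem maxent_irl_upper_bound_general
    (a b : ℝ) (ha : 0 < a) (N : ℕ) (hN : 1 ≤ N)
    (cdemo csamp q : Fin N → ℝ) (hq : ∀ i, 0 < q i)
    (hmem : ∀ i, a ≤ Real.exp (-csamp i) / q i ∧ Real.exp (-csamp i) / q i ≤ b) :
    (1 / (N : ℝ)) * ∑ i, cdemo i
        + Real.log ((1 / (N : ℝ)) * ∑ i, Real.exp (-csamp i) / q i)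
      ≤ (1 / (N : ℝ)) * ∑ i, (cdemo i - csamp i - Real.log (q i))
          - (Real.log a + Real.log b - 2 * Real.log ((a + b) / 2)) := by
  have hb : 0 < b := ha.trans_le ((hmem ⟨0, hN⟩).1.trans (hmem ⟨0, hN⟩).2)
  have hw₁ : ∑ _i : Fin N, 1 / (N : ℝ) = 1 := by
    rw [sum_const, card_univ, Fintype.card_fin, nsmul_eq_mul]
    field_simp [Nat.cast_ne_zero.2 (by omega : N ≠ 0)]
  have hlog : ∀ i, log (exp (-csamp i) / q i) = -csamp i - log (q i) := fun i => by
    rw [log_div (exp_ne_zero _) (hq i).ne', log_exp]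
  have hK : log (((a + b) / 2) ^ 2 / (a * b))
      = -(log a + log b - 2 * log ((a + b) / 2)) := by
    rw [log_div (by positivity) (by positivity), log_pow, log_mul ha.ne' hb.ne']
    push_cast
    ring
  have key := log_sum_mul_le_sum_mul_log_add (fun _ _ => by positivity) hw₁ ha fun i _ => hmem i
  simp only [← mul_sum, hlog, hK] at key
  have hsplit : ∑ i, (cdemo i - csamp i - log (q i))
      = ∑ i, cdemo i + ∑ i, (-csamp i - log (q i)) := by
    rw [← sum_add_distrib]
    exact sum_congr rfl fun i _ => by ring
  rw [hsplit, mul_add]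
  linarith

theorem maxent_irl_upper_bound
    (a b : ℝ) (ha : 0 < a) (hab : a ≤ b) (N : ℕ) (hN : 1 ≤ N)
    (cdemo csamp q : Fin N → ℝ) (hq : ∀ i, 0 < q i)
    (hmem : ∀ i, a ≤ Real.exp (-csamp i) / q i ∧ Real.exp (-csamp i) / q i ≤ b) :
    (1 / (N : ℝ)) * ∑ i, cdemo i
        + Real.log ((1 / (N : ℝ)) * ∑ i, Real.exp (-csamp i) / q i)
      ≤ (1 / (N : ℝ)) * ∑ i, (cdemo i - csamp i - Real.log (q i))
          - (Real.log a + Real.log b - 2 * Real.log ((a + b) / 2)) :=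
  maxent_irl_upper_bound_general a b ha N hN cdemo csamp q hq hmem
end

section
/- Let $f:[a,b]\to\mathbb{R}$ be convex, and let $y_1, y_2 \in [a,b]$ with weights $p_1, p_2 > 0$, $p_1 + p_2 = 1$. Then $p_1 f(y_1) + p_2 f(y_2) - f(p_1 y_1 + p_2 y_2) \le \max_{t \in [0,1]} \left[ t f(a) + (1-t) f(b) - f(t a + (1-t) b) \right]$. -/
private lemma icc_rep (a b y : ℝ) (hlt : a < b) (hy : y ∈ Set.Icc a b) :
    ∃ t ∈ Set.Icc (0:ℝ) 1, t * a + (1 - t) * b = y := by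
  have hne : b - a ≠ 0 := by linarith
  refine ⟨(b - y) / (b - a), ⟨div_nonneg (by linarith [hy.2]) (by linarith),
    by rw [div_le_one (by linarith)]; linarith [hy.1]⟩, ?_⟩
  field_simp
  ring

theorem two_point_jensen_gap_bound
    (a b : ℝ) (hab : a ≤ b) (f : ℝ → ℝ)
    (hf : ConvexOn ℝ (Set.Icc a b) f)
    (y₁ y₂ : ℝ) (hy₁ : y₁ ∈ Set.Icc a b) (hy₂ : y₂ ∈ Set.Icc a b)
    (p₁ p₂ : ℝ) (hp₁ : 0 < p₁) (hp₂ : 0 < p₂) (hp : p₁ + p₂ = 1) :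
    p₁ * f y₁ + p₂ * f y₂ - f (p₁ * y₁ + p₂ * y₂)
      ≤ ⨆ t : Set.Icc (0 : ℝ) 1,
          ((t : ℝ) * f a + (1 - (t : ℝ)) * f b - f ((t : ℝ) * a + (1 - (t : ℝ)) * b)) := by
  have ha : a ∈ Set.Icc a b := ⟨le_refl a, hab⟩
  have hb : b ∈ Set.Icc a b := ⟨hab, le_refl b⟩
  -- upper bound for f on [a,b]
  have hub : ∀ x ∈ Set.Icc a b, f x ≤ max (f a) (f b) := by
    intro x hx
    exact hf.le_on_segment ha hb ((segment_eq_Icc hab) ▸ hx)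
  -- lower bound for f on [a,b]
  have hlb : ∀ x ∈ Set.Icc a b, 2 * f ((a + b) / 2) - max (f a) (f b) ≤ f x := by
    intro x hx
    have hx' : a + b - x ∈ Set.Icc a b := ⟨by linarith [hx.2], by linarith [hx.1]⟩
    have h1 : f ((1/2 : ℝ) • x + (1/2 : ℝ) • (a + b - x))
        ≤ (1/2 : ℝ) * f x + (1/2 : ℝ) * f (a + b - x) :=
      hf.2 hx hx' (by norm_num) (by norm_num) (by norm_num)
    have h2 : (1/2 : ℝ) • x + (1/2 : ℝ) • (a + b - x) = (a + b) / 2 := by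
      simp only [smul_eq_mul]; ring
    rw [h2] at h1
    have h3 := hub _ hx'
    linarith
  have hmemt : ∀ t : ℝ, t ∈ Set.Icc (0:ℝ) 1 → t * a + (1 - t) * b ∈ Set.Icc a b := by
    intro t ht
    constructor <;> nlinarith [ht.1, ht.2]
  have hbdd : BddAbove (Set.range fun t : Set.Icc (0 : ℝ) 1 =>
      ((t : ℝ) * f a + (1 - (t : ℝ)) * f b - f ((t : ℝ) * a + (1 - (t : ℝ)) * b))) := by
    refine ⟨max (f a) (f b) - (2 * f ((a + b) / 2) - max (f a) (f b)), ?_⟩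
    rintro x ⟨⟨t, ht⟩, rfl⟩
    have h1 : t * f a + (1 - t) * f b ≤ max (f a) (f b) := by
      have := le_max_left (f a) (f b)
      have := le_max_right (f a) (f b)
      nlinarith [ht.1, ht.2]
    have h2 := hlb _ (hmemt t ht)
    simp only []
    linarith
  have hp₂' : p₂ = 1 - p₁ := by linarith
  subst hp₂'
  rcases eq_or_lt_of_le hab with heq | hlt
  · -- degenerate case a = b
    subst heq
    have hy1 : y₁ = a := le_antisymm hy₁.2 hy₁.1
    have hy2 : y₂ = a := le_antisymm hy₂.2 hy₂.1
    have hle := le_ciSup hbdd (⟨0, by norm_num, by norm_num⟩ : Set.Icc (0:ℝ) 1)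
    have hval : p₁ * f y₁ + (1 - p₁) * f y₂ - f (p₁ * y₁ + (1 - p₁) * y₂)
        = (0:ℝ) * f a + (1 - 0) * f a - f ((0:ℝ) * a + (1 - 0) * a) := by
      rw [hy1, hy2, show p₁ * a + (1 - p₁) * a = a by ring]
      ring
    rw [hval]
    exact hle
  · obtain ⟨t₁, ht₁, hrep₁⟩ := icc_rep a b y₁ hlt hy₁
    obtain ⟨t₂, ht₂, hrep₂⟩ := icc_rep a b y₂ hlt hy₂
    have htmem : p₁ * t₁ + (1 - p₁) * t₂ ∈ Set.Icc (0:ℝ) 1 := by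
      constructor
      · nlinarith [ht₁.1, ht₂.1]
      · nlinarith [ht₁.2, ht₂.2]
    have hconv₁ : f y₁ ≤ t₁ * f a + (1 - t₁) * f b := by
      have h := hf.2 ha hb ht₁.1 (show (0:ℝ) ≤ 1 - t₁ by linarith [ht₁.2]) (show t₁ + (1 - t₁) = 1 by ring)
      rw [smul_eq_mul, smul_eq_mul, smul_eq_mul, smul_eq_mul, hrep₁] at h
      exact h
    have hconv₂ : f y₂ ≤ t₂ * f a + (1 - t₂) * f b := by
      have h := hf.2 ha hb ht₂.1 (show (0:ℝ) ≤ 1 - t₂ by linarith [ht₂.2]) (show t₂ + (1 - t₂) = 1 by ring)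
      rw [smul_eq_mul, smul_eq_mul, smul_eq_mul, smul_eq_mul, hrep₂] at h
      exact h
    have hrep : (p₁ * t₁ + (1 - p₁) * t₂) * a + (1 - (p₁ * t₁ + (1 - p₁) * t₂)) * b
        = p₁ * y₁ + (1 - p₁) * y₂ := by
      rw [← hrep₁, ← hrep₂]; ring
    have key : p₁ * f y₁ + (1 - p₁) * f y₂ - f (p₁ * y₁ + (1 - p₁) * y₂)
        ≤ (p₁ * t₁ + (1 - p₁) * t₂) * f a + (1 - (p₁ * t₁ + (1 - p₁) * t₂)) * f b
          - f ((p₁ * t₁ + (1 - p₁) * t₂) * a + (1 - (p₁ * t₁ + (1 - p₁) * t₂)) * b) := by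
      rw [hrep]
      nlinarith [mul_le_mul_of_nonneg_left hconv₁ hp₁.le,
        mul_le_mul_of_nonneg_left hconv₂ (by linarith : (0:ℝ) ≤ 1 - p₁)]
    exact key.trans (le_ciSup hbdd (⟨p₁ * t₁ + (1 - p₁) * t₂, htmem⟩ : Set.Icc (0:ℝ) 1))
end
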